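/- arXiv:2405.20406 — 2 statements merged into one kernel-verified Lean document; each statement's English description precedes it below -/
import Mathlib

section
/- Let (S,s) be a finite bijective set-theoretic solution to the Pentagon Equation, with s(x,y) = (x·y, θ_x(y)). Then: (1) for all x,y,a,b ∈ S one has θ_x(a) = θ_x(b) if and only if θ_y(a) = θ_y(b); (2) the images θ_x(S) and θ_y(S) have the same cardinality for all x,y ∈ S; (3) the common equivalence relation ∼ defined by a ∼ b ⟺ θ_x(a) = θ_x(b) is a left congruence of (S,·), i.e. a ∼ b implies y·a ∼ y·b for all y ∈ S. -/
set_option linter.unusedSectionVars false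

namespace PE

/-- `s` applied to components 1,2 of a triple. -/
def s12 {S : Type*} (s : S × S → S × S) : S × S × S → S × S × S :=
  fun p => ((s (p.1, p.2.1)).1, (s (p.1, p.2.1)).2, p.2.2)

/-- `s` applied to components 1,3 of a triple. -/
def s13 {S : Type*} (s : S × S → S × S) : S × S × S → S × S × S :=
  fun p => ((s (p.1, p.2.2)).1, p.2.1, (s (p.1, p.2.2)).2)

/-- `s` applied to components 2,3 of a triple. -/
def s23 {S : Type*} (s : S × S → S × S) : S × S × S → S × S × S :=
  fun p => (p.1, s (p.2.1, p.2.2))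

/-- `(S, s)` is a set-theoretic solution to the Pentagon Equation:
`s₂₃ ∘ s₁₃ ∘ s₁₂ = s₁₂ ∘ s₂₃`. -/
def IsPE {S : Type*} (s : S × S → S × S) : Prop :=
  s23 s ∘ s13 s ∘ s12 s = s12 s ∘ s23 s

/-- The induced binary operation `x · y`: the first component of `s (x, y)`. -/
def mul {S : Type*} (s : S × S → S × S) (x y : S) : S := (s (x, y)).1

/-- The map `θ_x`: `theta s x y = θ_x(y)` is the second component of `s (x, y)`. -/
def theta {S : Type*} (s : S × S → S × S) (x y : S) : S := (s (x, y)).2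

section Aux

variable {S : Type*}

/-- Associativity, from the pentagon equation. -/
private lemma pe_A (s : S × S → S × S) (h : IsPE s) (x y z : S) :
    mul s (mul s x y) z = mul s x (mul s y z) :=
  congrArg (fun p => p.1) (congrFun h (x, y, z))

/-- The `B` identity `θ_x(y)·θ_{xy}(z) = θ_x(yz)`. -/
private lemma pe_B (s : S × S → S × S) (h : IsPE s) (x y z : S) :
    mul s (theta s x y) (theta s (mul s x y) z) = theta s x (mul s y z) :=
  congrArg (fun p => p.2.1) (congrFun h (x, y, z))

/-- The `C` identity `θ_{θ_x(y)}(θ_{xy}(z)) = θ_y(z)`. -/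
private lemma pe_C (s : S × S → S × S) (h : IsPE s) (x y z : S) :
    theta s (theta s x y) (theta s (mul s x y) z) = theta s y z :=
  congrArg (fun p => p.2.2) (congrFun h (x, y, z))

private lemma s_eq (s : S × S → S × S) (p : S × S) :
    s p = (mul s p.1 p.2, theta s p.1 p.2) := rfl

/-- Powers `pw s x k = x^(k+1)`. -/
private def pw (s : S × S → S × S) (x : S) : ℕ → S
  | 0 => x
  | k + 1 => mul s (pw s x k) x

private lemma pw_add (s : S × S → S × S)
    (hA : ∀ x y z, mul s (mul s x y) z = mul s x (mul s y z)) (x : S) :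
    ∀ a b, mul s (pw s x a) (pw s x b) = pw s x (a + b + 1) := by
  intro a b
  induction b with
  | zero => rfl
  | succ b ih =>
    show mul s (pw s x a) (mul s (pw s x b) x) = pw s x (a + (b + 1) + 1)
    rw [← hA (pw s x a) (pw s x b) x, ih]
    rfl

private lemma exists_idem [Finite S] (s : S × S → S × S)
    (hA : ∀ x y z, mul s (mul s x y) z = mul s x (mul s y z)) (x : S) :
    ∃ N, mul s (pw s x N) (pw s x N) = pw s x N := by
  obtain ⟨a, b, hab, heq⟩ := Finite.exists_ne_map_eq_of_infinite (pw s x)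
  suffices H : ∀ i j : ℕ, i < j → pw s x i = pw s x j →
      ∃ N, mul s (pw s x N) (pw s x N) = pw s x N by
    rcases Nat.lt_or_ge a b with h | h
    · exact H a b h heq
    · exact H b a (Nat.lt_of_le_of_ne h fun e => hab e.symm) heq.symm
  intro i j hij hper
  obtain ⟨e0, rfl⟩ : ∃ e0, j = i + (e0 + 1) := ⟨j - i - 1, by omega⟩
  have step : ∀ k, pw s x (i + (e0 + 1) + k) = pw s x (i + k) := by
    intro k
    induction k with
    | zero => exact hper.symm
    | succ k ih =>
      show mul s (pw s x (i + (e0 + 1) + k)) x = mul s (pw s x (i + k)) x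
      rw [ih]
  have stepm : ∀ m k, pw s x (i + m * (e0 + 1) + k) = pw s x (i + k) := by
    intro m
    induction m with
    | zero => intro k; norm_num
    | succ m ih =>
      intro k
      have h1 : i + (m + 1) * (e0 + 1) + k = i + (e0 + 1) + (m * (e0 + 1) + k) := by ring
      rw [h1, step (m * (e0 + 1) + k), ← Nat.add_assoc]
      exact ih k
  refine ⟨i + (i + 1) * e0, ?_⟩
  rw [pw_add s hA x]
  have h2 : i + (i + 1) * e0 + (i + (i + 1) * e0) + 1
      = i + (i + 1) * (e0 + 1) + ((i + 1) * e0) := by ring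
  rw [h2, stepm (i + 1) ((i + 1) * e0)]

end Aux

section Counting

open Finset

variable {S : Type*} [Fintype S] [DecidableEq S]

/-- Rank of `θ_t`. -/
private def rk (s : S × S → S × S) (t : S) : ℕ := (Finset.univ.image (theta s t)).card

private lemma theta_comp (s : S × S → S × S)
    (hC : ∀ x y z, theta s (theta s x y) (theta s (mul s x y) z) = theta s y z) (x y : S) :
    theta s y = theta s (theta s x y) ∘ theta s (mul s x y) :=
  funext fun z => (hC x y z).symm

private lemma image_theta (s : S × S → S × S)
    (hC : ∀ x y z, theta s (theta s x y) (theta s (mul s x y) z) = theta s y z) (x y : S) :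
    Finset.univ.image (theta s y)
      = (Finset.univ.image (theta s (mul s x y))).image (theta s (theta s x y)) := by
  rw [Finset.image_image, ← theta_comp s hC x y]

private lemma rk_le_mul (s : S × S → S × S)
    (hC : ∀ x y z, theta s (theta s x y) (theta s (mul s x y) z) = theta s y z) (x y : S) :
    rk s y ≤ rk s (mul s x y) := by
  unfold rk
  rw [image_theta s hC x y]
  exact Finset.card_image_le

private lemma rk_le_theta (s : S × S → S × S)
    (hC : ∀ x y z, theta s (theta s x y) (theta s (mul s x y) z) = theta s y z) (x y : S) :
    rk s y ≤ rk s (theta s x y) := by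
  unfold rk
  rw [image_theta s hC x y]
  exact Finset.card_le_card (Finset.image_subset_image (Finset.subset_univ _))

private lemma sum_reindex (s : S × S → S × S) (hbij : Function.Bijective s)
    (F : S × S → ℕ) : ∑ p : S × S, F (s p) = ∑ p : S × S, F p :=
  Equiv.sum_comp (Equiv.ofBijective s hbij) F

private lemma sum_snd_const (G : S → ℕ) :
    ∑ p : S × S, G p.2 = Fintype.card S * ∑ v : S, G v := by
  calc ∑ p : S × S, G p.2 = ∑ _a : S, ∑ b : S, G b := by rw [Fintype.sum_prod_type]
    _ = Fintype.card S * ∑ v : S, G v := by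
        rw [Finset.sum_const, Finset.card_univ, smul_eq_mul]

private lemma sum_fst_eq_sum_snd (F : S → ℕ) :
    ∑ p : S × S, F p.1 = ∑ p : S × S, F p.2 := by
  rw [Fintype.sum_prod_type, Fintype.sum_prod_type, Finset.sum_comm]

private lemma rk_mul (s : S × S → S × S) (hbij : Function.Bijective s)
    (hC : ∀ x y z, theta s (theta s x y) (theta s (mul s x y) z) = theta s y z) (x y : S) :
    rk s (mul s x y) = rk s y := by
  have hle : ∀ p ∈ (Finset.univ : Finset (S × S)), rk s p.2 ≤ rk s (mul s p.1 p.2) :=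
    fun p _ => rk_le_mul s hC p.1 p.2
  have hsum : ∑ p : S × S, rk s p.2 = ∑ p : S × S, rk s (mul s p.1 p.2) := by
    calc ∑ p : S × S, rk s p.2 = ∑ p : S × S, rk s p.1 := (sum_fst_eq_sum_snd _).symm
      _ = ∑ p : S × S, rk s (s p).1 := (sum_reindex s hbij (fun q => rk s q.1)).symm
      _ = ∑ p : S × S, rk s (mul s p.1 p.2) := rfl
  exact (((Finset.sum_eq_sum_iff_of_le hle).mp hsum) (x, y) (Finset.mem_univ _)).symm

private lemma rk_theta (s : S × S → S × S) (hbij : Function.Bijective s)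
    (hC : ∀ x y z, theta s (theta s x y) (theta s (mul s x y) z) = theta s y z) (x y : S) :
    rk s (theta s x y) = rk s y := by
  have hle : ∀ p ∈ (Finset.univ : Finset (S × S)), rk s p.2 ≤ rk s (theta s p.1 p.2) :=
    fun p _ => rk_le_theta s hC p.1 p.2
  have hsum : ∑ p : S × S, rk s p.2 = ∑ p : S × S, rk s (theta s p.1 p.2) := by
    calc ∑ p : S × S, rk s p.2 = ∑ p : S × S, rk s (s p).2 :=
          (sum_reindex s hbij (fun q => rk s q.2)).symm
      _ = ∑ p : S × S, rk s (theta s p.1 p.2) := rfl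
  exact (((Finset.sum_eq_sum_iff_of_le hle).mp hsum) (x, y) (Finset.mem_univ _)).symm

/-- All kernels absorb left multiplication: `ker θ_{ab} = ker θ_b`. -/
private lemma ker_mul (s : S × S → S × S) (hbij : Function.Bijective s)
    (hC : ∀ x y z, theta s (theta s x y) (theta s (mul s x y) z) = theta s y z)
    (a b c d : S) :
    theta s (mul s a b) c = theta s (mul s a b) d ↔ theta s b c = theta s b d := by
  constructor
  · intro h
    rw [← hC a b c, ← hC a b d, h]
  · intro h
    have hcard : ((Finset.univ.image (theta s (mul s a b))).image
        (theta s (theta s a b))).card = (Finset.univ.image (theta s (mul s a b))).card := by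
      rw [← image_theta s hC a b]
      exact (rk_mul s hbij hC a b).symm
    have hinj := Finset.injOn_of_card_image_eq hcard
    have h1 : theta s (theta s a b) (theta s (mul s a b) c)
        = theta s (theta s a b) (theta s (mul s a b) d) := by
      rw [hC a b c, hC a b d]; exact h
    exact hinj (Finset.mem_coe.mpr (Finset.mem_image_of_mem _ (Finset.mem_univ c)))
      (Finset.mem_coe.mpr (Finset.mem_image_of_mem _ (Finset.mem_univ d))) h1

private lemma card_filter_prod {α β : Type*} [Fintype α] [Fintype β]
    (P : α × β → Prop) [DecidablePred P] :
    (Finset.univ.filter P).card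
      = ∑ a : α, (Finset.univ.filter fun b => P (a, b)).card := by
  rw [Finset.card_filter, Fintype.sum_prod_type]
  exact Finset.sum_congr rfl fun a _ => (Finset.card_filter _ _).symm

private def Acnt (s : S × S → S × S) (t t' : S) : ℕ :=
  ∑ x : S, if mul s x t = mul s x t' then 1 else 0

private def Bcnt (s : S × S → S × S) (t t' : S) : ℕ :=
  ∑ y : S, if mul s t y = mul s t' y then 1 else 0

/-- The key counting consequence of bijectivity: a single right-multiplication
collision forces total left-multiplication collapse. -/
private lemma dagger (s : S × S → S × S) (hbij : Function.Bijective s)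
    (hA : ∀ x y z, mul s (mul s x y) z = mul s x (mul s y z))
    (hB : ∀ x y z, mul s (theta s x y) (theta s (mul s x y) z) = theta s x (mul s y z))
    (z z' y0 : S) (hy0 : mul s z y0 = mul s z' y0) :
    ∀ x, mul s x z = mul s x z' := by
  have hkey : ∀ x t y, s (x, mul s t y)
      = (mul s (mul s x t) y, mul s (theta s x t) (theta s (mul s x t) y)) := by
    intro x t y
    rw [s_eq s (x, mul s t y)]
    exact Prod.ext_iff.mpr ⟨(hA x t y).symm, (hB x t y).symm⟩
  let e := Equiv.ofBijective s hbij
  have hesymm : ∀ u w : S, s (e.symm (u, w)) = (u, w) := fun u w => e.apply_symm_apply (u, w)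
  have hm : ∀ u w : S, mul s (e.symm (u, w)).1 (e.symm (u, w)).2 = u :=
    fun u w => congrArg Prod.fst (hesymm u w)
  have ht : ∀ u w : S, theta s (e.symm (u, w)).1 (e.symm (u, w)).2 = w :=
    fun u w => congrArg Prod.snd (hesymm u w)
  -- the backward analysis used twice below
  have hback : ∀ u w w' y : S,
      mul s w (theta s u y) = mul s w' (theta s u y) →
      (e.symm (u, w)).1 = (e.symm (u, w')).1 ∧
        mul s (e.symm (u, w)).2 y = mul s (e.symm (u, w')).2 y := by
    intro u w w' y hq
    have hxx : s ((e.symm (u, w)).1, mul s (e.symm (u, w)).2 y)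
        = s ((e.symm (u, w')).1, mul s (e.symm (u, w')).2 y) := by
      rw [hkey, hkey, hm u w, ht u w, hm u w', ht u w', hq]
    have hp := hbij.1 hxx
    exact Prod.ext_iff.mp hp
  -- the two quadruple sets have the same cardinality
  have hcards : (Finset.univ.filter (fun q : (S × S) × S × S =>
        mul s q.2.1 q.1.1 = mul s q.2.1 q.1.2 ∧ mul s q.1.1 q.2.2 = mul s q.1.2 q.2.2)).card
      = (Finset.univ.filter (fun q : (S × S) × S × S =>
        mul s q.1.1 (theta s q.2.1 q.2.2) = mul s q.1.2 (theta s q.2.1 q.2.2))).card := by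
    refine Finset.card_bij'
      (fun q _ => ((theta s q.2.1 q.1.1, theta s q.2.1 q.1.2), (mul s q.2.1 q.1.1, q.2.2)))
      (fun q _ => (((e.symm (q.2.1, q.1.1)).2, (e.symm (q.2.1, q.1.2)).2),
        ((e.symm (q.2.1, q.1.1)).1, q.2.2))) ?_ ?_ ?_ ?_
    · rintro ⟨⟨t, t'⟩, ⟨x, y⟩⟩ hq
      simp only [Finset.mem_filter, Finset.mem_univ, true_and] at hq ⊢
      obtain ⟨h1, h2⟩ := hq
      show mul s (theta s x t) (theta s (mul s x t) y)
        = mul s (theta s x t') (theta s (mul s x t) y)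
      rw [hB x t y, h1, hB x t' y, h2]
    · rintro ⟨⟨w, w'⟩, ⟨u, y⟩⟩ hq
      simp only [Finset.mem_filter, Finset.mem_univ, true_and] at hq ⊢
      obtain ⟨hx, hty⟩ := hback u w w' y hq
      constructor
      · show mul s (e.symm (u, w)).1 (e.symm (u, w)).2
          = mul s (e.symm (u, w)).1 (e.symm (u, w')).2
        rw [hm u w, hx, hm u w']
      · exact hty
    · rintro ⟨⟨t, t'⟩, ⟨x, y⟩⟩ hq
      simp only [Finset.mem_filter, Finset.mem_univ, true_and] at hq
      obtain ⟨h1, h2⟩ := hq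
      have k1 : e.symm (mul s x t, theta s x t) = (x, t) := by
        have hxt : e (x, t) = (mul s x t, theta s x t) := rfl
        rw [← hxt, Equiv.symm_apply_apply]
      have k2 : e.symm (mul s x t, theta s x t') = (x, t') := by
        have hxt : e (x, t') = (mul s x t', theta s x t') := rfl
        rw [h1, ← hxt, Equiv.symm_apply_apply]
      show (((e.symm (mul s x t, theta s x t)).2, (e.symm (mul s x t, theta s x t')).2),
          ((e.symm (mul s x t, theta s x t)).1, y)) = ((t, t'), (x, y))
      rw [k1, k2]
    · rintro ⟨⟨w, w'⟩, ⟨u, y⟩⟩ hq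
      simp only [Finset.mem_filter, Finset.mem_univ, true_and] at hq
      obtain ⟨hx, _⟩ := hback u w w' y hq
      show ((theta s (e.symm (u, w)).1 (e.symm (u, w)).2,
          theta s (e.symm (u, w)).1 (e.symm (u, w')).2),
          (mul s (e.symm (u, w)).1 (e.symm (u, w)).2, y)) = ((w, w'), (u, y))
      rw [ht u w, hm u w, hx, ht u w']
  -- left side card as a sum of products
  have hQl : (Finset.univ.filter (fun q : (S × S) × S × S =>
        mul s q.2.1 q.1.1 = mul s q.2.1 q.1.2 ∧ mul s q.1.1 q.2.2 = mul s q.1.2 q.2.2)).card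
      = ∑ tt' : S × S, Acnt s tt'.1 tt'.2 * Bcnt s tt'.1 tt'.2 := by
    calc (Finset.univ.filter (fun q : (S × S) × S × S =>
          mul s q.2.1 q.1.1 = mul s q.2.1 q.1.2 ∧ mul s q.1.1 q.2.2 = mul s q.1.2 q.2.2)).card
        = ∑ q : (S × S) × S × S, (if mul s q.2.1 q.1.1 = mul s q.2.1 q.1.2 ∧
            mul s q.1.1 q.2.2 = mul s q.1.2 q.2.2 then (1 : ℕ) else 0) :=
          Finset.card_filter _ _
      _ = ∑ tt' : S × S, ∑ xy : S × S, (if mul s xy.1 tt'.1 = mul s xy.1 tt'.2 ∧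
            mul s tt'.1 xy.2 = mul s tt'.2 xy.2 then (1 : ℕ) else 0) :=
          Fintype.sum_prod_type _
      _ = ∑ tt' : S × S, Acnt s tt'.1 tt'.2 * Bcnt s tt'.1 tt'.2 := by
          refine Finset.sum_congr rfl fun tt' _ => ?_
          calc ∑ xy : S × S, (if mul s xy.1 tt'.1 = mul s xy.1 tt'.2 ∧
                mul s tt'.1 xy.2 = mul s tt'.2 xy.2 then (1 : ℕ) else 0)
              = ∑ x : S, ∑ y : S, (if mul s x tt'.1 = mul s x tt'.2 ∧
                  mul s tt'.1 y = mul s tt'.2 y then (1 : ℕ) else 0) :=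
                Fintype.sum_prod_type _
            _ = ∑ x : S, ∑ y : S, (if mul s x tt'.1 = mul s x tt'.2 then (1 : ℕ) else 0) *
                  (if mul s tt'.1 y = mul s tt'.2 y then (1 : ℕ) else 0) := by
                refine Finset.sum_congr rfl fun x _ => Finset.sum_congr rfl fun y _ => ?_
                by_cases h1 : mul s x tt'.1 = mul s x tt'.2 <;>
                  by_cases h2 : mul s tt'.1 y = mul s tt'.2 y <;> simp [h1, h2]
            _ = Acnt s tt'.1 tt'.2 * Bcnt s tt'.1 tt'.2 :=
                (Finset.sum_mul_sum _ _ _ _).symm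
  -- right side card
  have hQr : (Finset.univ.filter (fun q : (S × S) × S × S =>
        mul s q.1.1 (theta s q.2.1 q.2.2) = mul s q.1.2 (theta s q.2.1 q.2.2))).card
      = ∑ tt' : S × S, Fintype.card S * Bcnt s tt'.1 tt'.2 := by
    calc (Finset.univ.filter (fun q : (S × S) × S × S =>
          mul s q.1.1 (theta s q.2.1 q.2.2) = mul s q.1.2 (theta s q.2.1 q.2.2))).card
        = ∑ q : (S × S) × S × S, (if mul s q.1.1 (theta s q.2.1 q.2.2)
            = mul s q.1.2 (theta s q.2.1 q.2.2) then (1 : ℕ) else 0) :=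
          Finset.card_filter _ _
      _ = ∑ ww' : S × S, ∑ uy : S × S, (if mul s ww'.1 (theta s uy.1 uy.2)
            = mul s ww'.2 (theta s uy.1 uy.2) then (1 : ℕ) else 0) :=
          Fintype.sum_prod_type _
      _ = ∑ ww' : S × S, Fintype.card S * Bcnt s ww'.1 ww'.2 := by
          refine Finset.sum_congr rfl fun ww' _ => ?_
          calc ∑ uy : S × S, (if mul s ww'.1 (theta s uy.1 uy.2)
                = mul s ww'.2 (theta s uy.1 uy.2) then (1 : ℕ) else 0)
              = ∑ p : S × S, (if mul s ww'.1 p.2 = mul s ww'.2 p.2 then (1 : ℕ) else 0) :=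
                sum_reindex s hbij
                  (fun p : S × S => if mul s ww'.1 p.2 = mul s ww'.2 p.2 then (1 : ℕ) else 0)
            _ = Fintype.card S * ∑ v : S, (if mul s ww'.1 v = mul s ww'.2 v then (1 : ℕ) else 0) :=
                sum_snd_const (fun v => if mul s ww'.1 v = mul s ww'.2 v then (1 : ℕ) else 0)
            _ = Fintype.card S * Bcnt s ww'.1 ww'.2 := rfl
  -- the sums are equal, with termwise inequality
  have hsum : ∑ tt' : S × S, Acnt s tt'.1 tt'.2 * Bcnt s tt'.1 tt'.2
      = ∑ tt' : S × S, Fintype.card S * Bcnt s tt'.1 tt'.2 := by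
    rw [← hQl, ← hQr, hcards]
  have hAle : ∀ t t' : S, Acnt s t t' ≤ Fintype.card S := by
    intro t t'
    have h1 : Acnt s t t' ≤ ∑ _x : S, 1 :=
      Finset.sum_le_sum fun i _ => by split <;> omega
    simpa using h1
  have hle : ∀ tt' ∈ (Finset.univ : Finset (S × S)),
      Acnt s tt'.1 tt'.2 * Bcnt s tt'.1 tt'.2 ≤ Fintype.card S * Bcnt s tt'.1 tt'.2 :=
    fun tt' _ => Nat.mul_le_mul_right _ (hAle tt'.1 tt'.2)
  have hpt := (Finset.sum_eq_sum_iff_of_le hle).mp hsum (z, z') (Finset.mem_univ _)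
  -- B z z' > 0 thanks to the witness y0
  have hBpos : 0 < Bcnt s z z' := by
    rcases Nat.eq_zero_or_pos (Bcnt s z z') with h0 | h0
    · exfalso
      have h1 := Finset.sum_eq_zero_iff.mp h0 y0 (Finset.mem_univ y0)
      simp [hy0] at h1
    · exact h0
  have hAcard : Acnt s z z' = Fintype.card S := Nat.eq_of_mul_eq_mul_right hBpos hpt
  have hsum1 : ∑ x : S, (if mul s x z = mul s x z' then (1 : ℕ) else 0) = ∑ _x : S, 1 := by
    have h2 : (∑ _x : S, (1 : ℕ)) = Fintype.card S := by simp
    rw [h2]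
    exact hAcard
  have hpt2 := (Finset.sum_eq_sum_iff_of_le
    (fun (i : S) _ => by split <;> omega)).mp hsum1
  intro x
  have hx := hpt2 x (Finset.mem_univ x)
  by_cases h : mul s x z = mul s x z'
  · exact h
  · simp [h] at hx

end Counting

/-- (1) the kernel relations of the maps `θ_x` all coincide;
(2) all images `θ_x(S)` have the same cardinality; (3) the common kernel relation
is a left congruence of `(S,·)`. -/
theorem statement4 {S : Type*} [Finite S] [Nonempty S] (s : S × S → S × S)
    (hPE : IsPE s) (hbij : Function.Bijective s) :
    (∀ x y a b : S, theta s x a = theta s x b ↔ theta s y a = theta s y b) ∧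
    (∀ x y : S, Nat.card (Set.range (theta s x)) = Nat.card (Set.range (theta s y))) ∧
    (∀ x a b : S, theta s x a = theta s x b →
      ∀ y : S, theta s x (mul s y a) = theta s x (mul s y b)) := by
  have hA := pe_A s hPE
  have hB := pe_B s hPE
  have hC := pe_C s hPE
  cases nonempty_fintype S
  classical
  have ker_pow : ∀ (x : S) (k : ℕ) (c d : S),
      (theta s (pw s x k) c = theta s (pw s x k) d ↔ theta s x c = theta s x d) := by
    intro x k c d
    cases k with
    | zero => exact Iff.rfl
    | succ k => exact ker_mul s hbij hC (pw s x k) x c d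
  have idem_absorb : ∀ f e : S, mul s e e = e → mul s f f = f → mul s f e = f := by
    intro f e he hf
    have h1 : mul s (mul s f e) e = mul s f e := by rw [hA f e e, he]
    have h2 := dagger s hbij hA hB (mul s f e) f e h1
    calc mul s f e = mul s (mul s f f) e := by rw [hf]
      _ = mul s f (mul s f e) := hA f f e
      _ = mul s f f := h2 f
      _ = f := hf
  have part1 : ∀ x y a b : S, theta s x a = theta s x b ↔ theta s y a = theta s y b := by
    intro x y a b
    obtain ⟨Nx, hfx⟩ := exists_idem s hA x
    obtain ⟨Ny, hey⟩ := exists_idem s hA y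
    have hfe : mul s (pw s x Nx) (pw s y Ny) = pw s x Nx := idem_absorb _ _ hey hfx
    calc theta s x a = theta s x b
        ↔ theta s (pw s x Nx) a = theta s (pw s x Nx) b := (ker_pow x Nx a b).symm
      _ ↔ theta s (mul s (pw s x Nx) (pw s y Ny)) a
          = theta s (mul s (pw s x Nx) (pw s y Ny)) b := by rw [hfe]
      _ ↔ theta s (pw s y Ny) a = theta s (pw s y Ny) b := ker_mul s hbij hC _ _ a b
      _ ↔ theta s y a = theta s y b := ker_pow y Ny a b
  refine ⟨part1, ?_, ?_⟩
  · intro x y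
    have hc : ∀ t : S, Nat.card (Set.range (theta s t)) = rk s t := by
      intro t
      rw [Nat.card_coe_set_eq, ← Set.image_univ, ← Finset.coe_univ, ← Finset.coe_image,
        Set.ncard_coe_finset]
      rfl
    rw [hc x, hc y]
    obtain ⟨⟨g, h⟩, hgh⟩ := hbij.2 (x, y)
    have h1 : mul s g h = x := congrArg Prod.fst hgh
    have h2 : theta s g h = y := congrArg Prod.snd hgh
    rw [← h1, ← h2, rk_mul s hbij hC, rk_theta s hbij hC]
  · intro x a b h y
    have h2 : theta s (mul s x y) a = theta s (mul s x y) b :=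
      (part1 x (mul s x y) a b).mp h
    rw [← hB x y a, ← hB x y b, h2]

end PE
end

section
/- Let (S,s) be a finite bijective set-theoretic solution to the Pentagon Equation, with s(x,y) = (x·y, θ_x(y)). Then: (i) for every x ∈ S there exists a ·-idempotent e ∈ S such that θ_x = θ_e; (ii) for every ·-idempotent e one has θ_{θ_e(e)} = id_S (so this holds independently of the choice of e); (iii) for all ·-idempotents e,f there exists a ·-idempotent g with θ_f ∘ θ_e = θ_g; consequently the set {θ_e : e ·-idempotent} is a subgroup of the symmetric group on S with identity element id_S. -/
namespace PE

lemma exists_idempotent {S : Type*} [Finite S] [Nonempty S] (m : S → S → S)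
    (hassoc : ∀ x y z, m (m x y) z = m x (m y z)) : ∃ e, m e e = e := by
  have x : S := Classical.arbitrary S
  let p : ℕ → S := fun n => Nat.rec x (fun _ ih => m ih x) n
  have hstep : ∀ n, p (n + 1) = m (p n) x := fun n => rfl
  have hadd : ∀ a b, m (p a) (p b) = p (a + b + 1) := by
    intro a b
    induction b with
    | zero => rfl
    | succ b ih =>
        calc m (p a) (p (b+1)) = m (p a) (m (p b) x) := by rw [hstep b]
          _ = m (m (p a) (p b)) x := (hassoc _ _ _).symm
          _ = m (p (a+b+1)) x := by rw [ih]
          _ = p (a+b+1+1) := by rw [hstep]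
          _ = p (a+(b+1)+1) := by rw [show a+b+1+1 = a+(b+1)+1 from by omega]
  obtain ⟨i, j, hne, heq⟩ := Finite.exists_ne_map_eq_of_infinite p
  have key : ∀ i d, 0 < d → p (i + d) = p i → ∃ e, m e e = e := by
    intro i d hd hper
    have hshift : ∀ k, p (i + k + d) = p (i + k) := by
      intro k
      induction k with
      | zero => exact hper
      | succ k ih =>
          calc p (i+(k+1)+d) = p ((i+k+d)+1) := by rw [show i+(k+1)+d = (i+k+d)+1 from by omega]
            _ = m (p (i+k+d)) x := hstep _
            _ = m (p (i+k)) x := by rw [ih]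
            _ = p ((i+k)+1) := by rw [hstep]
            _ = p (i+(k+1)) := by rw [show (i+k)+1 = i+(k+1) from by omega]
    have hmult : ∀ c k, p (i + c * d + k) = p (i + k) := by
      intro c
      induction c with
      | zero =>
          intro k
          rw [show i + 0 * d + k = i + k from by omega]
      | succ c ih =>
          intro k
          have hsm : (c + 1) * d = c * d + d := Nat.succ_mul c d
          calc p (i + (c+1) * d + k) = p (i + (c * d + k) + d) := by
                rw [show i + (c+1) * d + k = i + (c * d + k) + d from by omega]
            _ = p (i + (c * d + k)) := hshift (c * d + k)
            _ = p (i + c * d + k) := by rw [show i + (c * d + k) = i + c * d + k from by omega]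
            _ = p (i + k) := ih k
    have hD : i + 1 ≤ (i + 1) * d := by
      calc i + 1 = (i+1) * 1 := by omega
      _ ≤ (i+1) * d := Nat.mul_le_mul_left (i+1) hd
    refine ⟨p (i + ((i+1) * d - i - 1)), ?_⟩
    rw [hadd]
    rw [show i + ((i+1)*d - i - 1) + (i + ((i+1)*d - i - 1)) + 1
        = i + (i+1) * d + ((i+1)*d - i - 1) from by omega]
    rw [hmult]
  rcases Nat.lt_or_ge i j with h | h
  · exact key i (j - i) (by omega) (by rw [show i + (j - i) = j from by omega]; exact heq.symm)
  · have : j < i := by omega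
    exact key j (i - j) (by omega) (by rw [show j + (i - j) = i from by omega]; exact heq)


section Lemmas
variable {S : Type*} (s : S × S → S × S)

lemma comps (hPE : IsPE s) (x y z : S) :
    mul s (mul s x y) z = mul s x (mul s y z) ∧
    mul s (theta s x y) (theta s (mul s x y) z) = theta s x (mul s y z) ∧
    theta s (theta s x y) (theta s (mul s x y) z) = theta s y z := by
  have h := congrFun hPE (x, y, z)
  simp only [Function.comp_apply, s12, s13, s23] at h
  exact ⟨congrArg (fun p => p.1) h, congrArg (fun p => p.2.1) h, congrArg (fun p => p.2.2) h⟩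

lemma spair (a b : S) : s (a, b) = (mul s a b, theta s a b) := rfl

lemma psi_range [Finite S] (hPE : IsPE s) (hbij : Function.Bijective s) (e v : S)
    (hv : v ∈ Set.range (theta s e)) (w : S) :
    ∃ y z : S, theta s e y = v ∧ theta s (mul s e y) z = w := by
  classical
  set E := Equiv.ofBijective s hbij with hE
  set Ψ : S × S → S × S := fun p => (theta s e p.1, theta s (mul s e p.1) p.2) with hΨ
  set Ψ' : S × S → S × S := fun p => (theta s e p.1, p.2) with hΨ'
  have hconj : ∀ p, Ψ p = E.symm (Ψ' (E p)) := by
    rintro ⟨y, z⟩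
    have hs : E (Ψ (y, z)) = Ψ' (E (y, z)) := by
      show s (theta s e y, theta s (mul s e y) z) = Ψ' (s (y, z))
      rw [spair s (theta s e y) (theta s (mul s e y) z), spair s y z]
      show (mul s (theta s e y) (theta s (mul s e y) z),
            theta s (theta s e y) (theta s (mul s e y) z))
          = (theta s e (mul s y z), theta s y z)
      rw [(comps s hPE e y z).2.1, (comps s hPE e y z).2.2]
    calc Ψ (y, z) = E.symm (E (Ψ (y, z))) := (E.symm_apply_apply _).symm
      _ = E.symm (Ψ' (E (y, z))) := congrArg E.symm hs
  have hrangeΨ' : Set.range Ψ' = (Set.range (theta s e)) ×ˢ (Set.univ : Set S) := by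
    ext ⟨a, b⟩
    constructor
    · rintro ⟨⟨c, d⟩, h⟩
      obtain ⟨h1, h2⟩ := Prod.mk.injEq .. ▸ h
      exact ⟨⟨c, h1⟩, trivial⟩
    · rintro ⟨⟨t, ht⟩, -⟩
      exact ⟨(t, b), by show (theta s e t, b) = (a, b); rw [ht]⟩
  have hrange : Set.range Ψ = E.symm '' ((Set.range (theta s e)) ×ˢ (Set.univ : Set S)) := by
    rw [show Ψ = E.symm ∘ Ψ' ∘ E from funext hconj, Set.range_comp,
      Function.Surjective.range_comp E.surjective Ψ', hrangeΨ']
  have hsub : Set.range Ψ ⊆ (Set.range (theta s e)) ×ˢ (Set.univ : Set S) := by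
    rintro _ ⟨⟨y, z⟩, rfl⟩
    exact ⟨⟨y, rfl⟩, trivial⟩
  have heq : Set.range Ψ = (Set.range (theta s e)) ×ˢ (Set.univ : Set S) := by
    refine Set.eq_of_subset_of_ncard_le hsub ?_ (Set.toFinite _)
    rw [hrange, Set.ncard_image_of_injective _ E.symm.injective]
  have hmem : (v, w) ∈ Set.range Ψ := by
    rw [heq]; exact ⟨hv, trivial⟩
  obtain ⟨⟨y, z⟩, hyz⟩ := hmem
  exact ⟨y, z, congrArg Prod.fst hyz, congrArg Prod.snd hyz⟩

lemma theta_theta_self [Finite S] (hPE : IsPE s) (hbij : Function.Bijective s) {e u : S}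
    (he : mul s e e = e) (hu : theta s e e = u) : theta s u = id := by
  have h1 : mul s u u = u := by
    have h := (comps s hPE e e e).2.1; rw [he, hu] at h; exact h
  have h2 : ∀ t, theta s u (theta s e t) = theta s e t := by
    intro t; have h := (comps s hPE e e t).2.2; rw [he, hu] at h; exact h
  have h3 : theta s u u = u := by have h := h2 e; rw [hu] at h; exact h
  have h4 : ∀ z, theta s u (mul s u z) = mul s u z := by
    intro z
    obtain ⟨y, t, hy, ht⟩ := psi_range s hPE hbij e u ⟨e, hu⟩ z
    have h := (comps s hPE e y t).2.1
    rw [hy, ht] at h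
    rw [h]; exact h2 _
  have h5 : ∀ z, mul s u (theta s u z) = mul s u z := by
    intro z; have h := (comps s hPE u u z).2.1
    rw [h3, h1] at h
    rw [h, h4]
  have h6 : ∀ z, theta s u (theta s u z) = theta s u z := by
    intro z; have h := (comps s hPE u u z).2.2; rw [h3, h1] at h; exact h
  funext z
  have hss : s (u, theta s u z) = s (u, z) := by
    rw [spair s u (theta s u z), spair s u z, h5, h6]
  exact congrArg Prod.snd (hbij.injective hss)

lemma range_theta_theta [Finite S] (hPE : IsPE s) (hbij : Function.Bijective s) (v w : S) :
    Set.range (theta s (theta s v w)) = Set.range (theta s w) := by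
  ext c
  constructor
  · intro hc
    set V : Set S := {x | c ∈ Set.range (theta s x)} with hV
    set D : Set (S × S) := Set.univ ×ˢ V with hD
    have hsub : s '' D ⊆ D := by
      rintro _ ⟨⟨a, b⟩, hab, rfl⟩
      obtain ⟨t, ht⟩ := hab.2
      refine ⟨trivial, ?_⟩
      show c ∈ Set.range (theta s ((s (a, b)).2))
      refine ⟨theta s (mul s a b) t, ?_⟩
      show theta s (theta s a b) (theta s (mul s a b) t) = c
      rw [(comps s hPE a b t).2.2]; exact ht
    have himg : s '' D = D :=
      Set.eq_of_subset_of_ncard_le hsub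
        (by rw [Set.ncard_image_of_injective _ hbij.injective]) (Set.toFinite D)
    have hmem : s (v, w) ∈ D := ⟨trivial, hc⟩
    rw [← himg] at hmem
    obtain ⟨⟨a, b⟩, hab, habs⟩ := hmem
    have hab2 : (a, b) = (v, w) := hbij.injective habs
    rw [hab2] at hab
    exact hab.2
  · rintro ⟨t, ht⟩
    exact ⟨theta s (mul s v w) t, by rw [(comps s hPE v w t).2.2]; exact ht⟩

lemma theta_surj [Finite S] [Nonempty S] (hPE : IsPE s) (hbij : Function.Bijective s) (a : S) :
    Function.Surjective (theta s a) := by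
  obtain ⟨e, he⟩ := exists_idempotent (mul s) (fun x y z => (comps s hPE x y z).1)
  have hu : theta s (theta s e e) = id := theta_theta_self s hPE hbij he rfl
  set E := Equiv.ofBijective s hbij with hE
  set u := theta s e e with hudef
  set v := (E.symm (a, u)).1 with hvdef
  set w := (E.symm (a, u)).2 with hwdef
  have hs : (mul s v w, theta s v w) = (a, u) := E.apply_symm_apply (a, u)
  have hv : mul s v w = a := (Prod.ext_iff.mp hs).1
  have hw : theta s v w = u := (Prod.ext_iff.mp hs).2
  have hth : ∀ z, theta s a z = theta s w z := by
    intro z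
    have h := (comps s hPE v w z).2.2
    rw [hv, hw, hu] at h
    exact h
  have hrange : Set.range (theta s w) = Set.univ := by
    have h := range_theta_theta s hPE hbij v w
    rw [hw, hu] at h
    rw [← h, Set.range_id]
  intro c
  have hc : c ∈ Set.range (theta s w) := by rw [hrange]; trivial
  obtain ⟨y, hy⟩ := hc
  exact ⟨y, by rw [hth y]; exact hy⟩


lemma exists_idem_theta {S : Type*} (s : S × S → S × S) [Finite S] [Nonempty S]
    (hPE : IsPE s) (hbij : Function.Bijective s) (x : S) :
    ∃ g : S, mul s g g = g ∧ theta s x = theta s g := by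
  obtain ⟨e, he⟩ := exists_idempotent (mul s) (fun a b c => (comps s hPE a b c).1)
  set u := theta s e e with hudef
  have hu : theta s u = id := theta_theta_self s hPE hbij he rfl
  have h1 : mul s u u = u := by
    have h := (comps s hPE e e e).2.1; rw [he] at h; exact h
  set E := Equiv.ofBijective s hbij with hE
  set lam : S → S := fun t => (E.symm (t, u)).1 with hlam
  set rho : S → S := fun t => (E.symm (t, u)).2 with hrho
  have hsx : ∀ t, (mul s (lam t) (rho t), theta s (lam t) (rho t)) = (t, u) := fun t =>
    E.apply_symm_apply (t, u)
  have hm : ∀ t, mul s (lam t) (rho t) = t := fun t => (Prod.ext_iff.mp (hsx t)).1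
  have hth : ∀ t, theta s (lam t) (rho t) = u := fun t => (Prod.ext_iff.mp (hsx t)).2
  have hP2 : ∀ t z, s (lam t, mul s (rho t) z) = (mul s t z, mul s u (theta s t z)) := by
    intro t z
    rw [spair s (lam t) (mul s (rho t) z)]
    have c1 : mul s (lam t) (mul s (rho t) z) = mul s t z := by
      rw [← (comps s hPE (lam t) (rho t) z).1, hm]
    have c2 : theta s (lam t) (mul s (rho t) z) = mul s u (theta s t z) := by
      have h := (comps s hPE (lam t) (rho t) z).2.1
      rw [hth, hm] at h
      exact h.symm
    rw [c1, c2]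
  have hP3 : ∀ t, lam (lam t) = lam t := by
    intro t
    have h := hP2 (lam t) (rho t)
    rw [hm t, hth t, h1] at h
    have h3 : s (lam t, rho t) = (t, u) := hsx t
    have h2 : s (lam (lam t), mul s (rho (lam t)) (rho t)) = s (lam t, rho t) := by
      rw [h, h3]
    have h4 : (lam (lam t), mul s (rho (lam t)) (rho t)) = (lam t, rho t) := hbij.injective h2
    exact (Prod.ext_iff.mp h4).1
  have hP5 : ∀ t, lam t = t := by
    intro t
    obtain ⟨y, hy⟩ := theta_surj s hPE hbij t u
    have hsy : s (t, y) = (mul s t y, u) := by rw [spair s t y, hy]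
    have hEsymm : E.symm (mul s t y, u) = (t, y) := by
      rw [← hsy]; exact E.symm_apply_apply (t, y)
    have ha : lam (mul s t y) = t := by
      show (E.symm (mul s t y, u)).1 = t
      rw [hEsymm]
    calc lam t = lam (lam (mul s t y)) := by rw [ha]
      _ = lam (mul s t y) := hP3 _
      _ = t := ha
  have hxg : mul s x (rho x) = x := by have h := hm x; rwa [hP5 x] at h
  have hthg : theta s x (rho x) = u := by have h := hth x; rwa [hP5 x] at h
  refine ⟨rho x, ?_, ?_⟩
  · have h := (comps s hPE x (rho x) (rho x)).2.1
    rw [hxg, hthg, h1] at h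
    have hbijx : Function.Bijective (theta s x) :=
      Finite.surjective_iff_bijective.mp (theta_surj s hPE hbij x)
    apply hbijx.injective
    rw [← h, hthg]
  · funext z
    have h := (comps s hPE x (rho x) z).2.2
    rw [hxg, hthg, hu] at h
    simp only [id_eq] at h
    exact h

lemma comp_idem {S : Type*} (s : S × S → S × S) [Finite S] [Nonempty S]
    (hPE : IsPE s) (hbij : Function.Bijective s) (e f : S) :
    ∃ g, mul s g g = g ∧ theta s f ∘ theta s e = theta s g := by
  set E := Equiv.ofBijective s hbij with hE
  set v := (E.symm (e, f)).1 with hv0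
  set w := (E.symm (e, f)).2 with hw0
  have hs : (mul s v w, theta s v w) = (e, f) := E.apply_symm_apply (e, f)
  have hv : mul s v w = e := (Prod.ext_iff.mp hs).1
  have hw : theta s v w = f := (Prod.ext_iff.mp hs).2
  obtain ⟨g, hg, hgth⟩ := exists_idem_theta s hPE hbij w
  refine ⟨g, hg, ?_⟩
  funext z
  have h := (comps s hPE v w z).2.2
  rw [hv, hw] at h
  show theta s f (theta s e z) = theta s g z
  rw [h, hgth]

end Lemmas

/-- (i) every `θ_x` equals `θ_e` for some `·`-idempotent `e`;
(ii) `θ_{θ_e(e)} = id` for every `·`-idempotent `e`; (iii) the composition of two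
maps `θ_f ∘ θ_e` (for idempotents `e, f`) is again of the form `θ_g` for an
idempotent `g`; consequently `{θ_e : e a ·-idempotent}` is a subgroup of the
symmetric group on `S` with identity `id`. -/
theorem statement6 {S : Type*} [Finite S] [Nonempty S] (s : S × S → S × S)
    (hPE : IsPE s) (hbij : Function.Bijective s) :
    (∀ x : S, ∃ e : S, mul s e e = e ∧ theta s x = theta s e) ∧
    (∀ e : S, mul s e e = e → theta s (theta s e e) = id) ∧
    (∀ e f : S, mul s e e = e → mul s f f = f →
      ∃ g : S, mul s g g = g ∧ theta s f ∘ theta s e = theta s g) ∧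
    (∃ H : Subgroup (Equiv.Perm S),
      (fun π : Equiv.Perm S => (π : S → S)) '' (H : Set (Equiv.Perm S)) =
        {f : S → S | ∃ e : S, mul s e e = e ∧ f = theta s e}) := by
  have hassoc : ∀ a b c : S, mul s (mul s a b) c = mul s a (mul s b c) :=
    fun a b c => (comps s hPE a b c).1
  obtain ⟨e₀, he₀⟩ := exists_idempotent (mul s) hassoc
  have hu₀idem : mul s (theta s e₀ e₀) (theta s e₀ e₀) = theta s e₀ e₀ := by
    have h := (comps s hPE e₀ e₀ e₀).2.1; rw [he₀] at h; exact h
  have hu₀ : theta s (theta s e₀ e₀) = id := theta_theta_self s hPE hbij he₀ rfl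
  refine ⟨?_, ?_, ?_, ?_⟩
  · intro x
    exact exists_idem_theta s hPE hbij x
  · intro e he
    exact theta_theta_self s hPE hbij he rfl
  · intro e f _ _
    exact comp_idem s hPE hbij e f
  · classical
    refine ⟨{ carrier := {π : Equiv.Perm S | ∃ e : S, mul s e e = e ∧ ⇑π = theta s e},
              mul_mem' := ?_, one_mem' := ?_, inv_mem' := ?_ }, ?_⟩
    · rintro π σ ⟨a, ha, hπ⟩ ⟨b, hb, hσ⟩
      obtain ⟨g, hg, hgth⟩ := comp_idem s hPE hbij b a
      exact ⟨g, hg, by rw [Equiv.Perm.coe_mul, hπ, hσ, hgth]⟩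
    · exact ⟨theta s e₀ e₀, hu₀idem, by rw [Equiv.Perm.coe_one, hu₀]⟩
    · rintro π ⟨a, ha, hπ⟩
      have hpow : ∀ n : ℕ, ∃ en : S, mul s en en = en ∧ ⇑(π ^ n) = theta s en := by
        intro n
        induction n with
        | zero => exact ⟨theta s e₀ e₀, hu₀idem, by rw [pow_zero, Equiv.Perm.coe_one, hu₀]⟩
        | succ n ih =>
            obtain ⟨b, hb, hbth⟩ := ih
            obtain ⟨g, hg, hgth⟩ := comp_idem s hPE hbij b a
            refine ⟨g, hg, ?_⟩
            rw [pow_succ', Equiv.Perm.coe_mul, hπ, hbth, hgth]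
      have hordpos : 0 < orderOf π := orderOf_pos π
      have hπinv : π⁻¹ = π ^ (orderOf π - 1) := by
        have h : π ^ (orderOf π - 1) * π = 1 := by
          rw [← pow_succ, Nat.sub_add_cancel hordpos, pow_orderOf_eq_one]
        exact inv_eq_of_mul_eq_one_left h
      rw [hπinv]
      exact hpow _
    · ext f
      constructor
      · rintro ⟨π, hπH, rfl⟩
        obtain ⟨e, he, hπ⟩ := hπH
        exact ⟨e, he, hπ⟩
      · rintro ⟨e, he, rfl⟩
        have hbije : Function.Bijective (theta s e) :=
          Finite.surjective_iff_bijective.mp (theta_surj s hPE hbij e)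
        exact ⟨Equiv.ofBijective _ hbije, ⟨e, he, rfl⟩, rfl⟩

end PE
end
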